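/- arXiv:0908.0699 — 3 statements merged into one kernel-verified Lean document; each statement's English description precedes it below -/
import Mathlib

section
/- Fix a real number q > 1. Let I be a finite index set and, for each β ∈ I, let a_β, b_β, c_β be real numbers with b_β ≠ 0 and c_β > 0. Define F(s) = ∏_{β ∈ I} (1 − q^{−(a_β + b_β·s)}) / (1 − q^{−c_β + a_β + b_β·s}) for complex s where the denominators are nonzero, and for real s₀ set z_n(s₀) = #{β ∈ I : a_β + b_β·s₀ = 0} and z_p(s₀) = #{β ∈ I : a_β + b_β·s₀ = c_β}. Then: (i) F extends to a holomorphic function on a neighborhood of s₀ if and only if z_n(s₀) ≥ z_p(s₀); and (ii) the meromorphic order of F at s₀ is ≤ 0 (i.e. the meromorphic continuation of F does not vanish at s₀) if and only if z_n(s₀) ≤ z_p(s₀). -/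
/-!
Each factor `s ↦ 1 - q^{-(a + b s)}` is entire and its derivative never vanishes (as `b ≠ 0`),
so all its zeros are simple, and at the real point `s₀` it vanishes exactly when
`a + b s₀ = 0`; likewise for the denominator factors with `a + b s₀ = c`. By additivity of
orders, `F` has meromorphic order `z_n(s₀) - z_p(s₀)` at `s₀`, which gives (ii). For (i), a
meromorphic function extends holomorphically across `s₀` iff its order there is nonnegative,
and since the zeros of the denominator are isolated, agreeing with `F` off them is the same as
agreeing with it on a punctured neighbourhood.
-/

open Complex Filter Topology

section

variable {𝕜 E : Type*} [NontriviallyNormedField 𝕜] [NormedAddCommGroup E] [NormedSpace 𝕜 E]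
  {x : 𝕜}

open Classical in
theorem AnalyticAt.meromorphicOrderAt_eq_ite_of_deriv_ne_zero {f : 𝕜 → E}
    (hf : AnalyticAt 𝕜 f x) (hf' : deriv f x ≠ 0) :
    meromorphicOrderAt f x = if f x = 0 then 1 else 0 := by
  rw [hf.meromorphicOrderAt_eq]
  split_ifs with h
  · rw [hf.analyticOrderAt_eq_one_of_zero_deriv_ne_zero h hf']
    rfl
  · rw [hf.analyticOrderAt_eq_zero.mpr h]
    rfl

theorem meromorphicOrderAt_prod_eq_ncard {ι : Type*} [Fintype ι] {f : ι → 𝕜 → 𝕜}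
    (hf : ∀ i, AnalyticAt 𝕜 (f i) x) (hf' : ∀ i, deriv (f i) x ≠ 0) :
    meromorphicOrderAt (fun z => ∏ i, f i z) x = Set.ncard {i | f i x = 0} := by
  classical
  rw [← Finset.prod_fn, meromorphicOrderAt_prod fun i _ => (hf i).meromorphicAt]
  simp_rw [fun i => (hf i).meromorphicOrderAt_eq_ite_of_deriv_ne_zero (hf' i)]
  rw [Finset.sum_boole, Set.ncard_eq_toFinset_card', Set.toFinset_ofPred]

end

theorem deriv_one_sub_exp_ne_zero {φ : ℂ → ℂ} {x : ℂ} (hφ : DifferentiableAt ℂ φ x)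
    (hφ' : deriv φ x ≠ 0) : deriv (fun z => 1 - exp (φ z)) x ≠ 0 := by
  rw [deriv_const_sub, deriv_cexp hφ]
  exact neg_ne_zero.mpr (mul_ne_zero (exp_ne_zero _) hφ')

theorem one_sub_exp_ofReal_mul_eq_zero_iff {t L : ℝ} (hL : L ≠ 0) :
    1 - exp ((t : ℂ) * L) = 0 ↔ t = 0 := by
  rw [sub_eq_zero, eq_comm, ← ofReal_mul, ← ofReal_exp, ofReal_eq_one, Real.exp_eq_one_iff,
    mul_eq_zero, or_iff_left hL]

theorem exists_differentiableOn_eq_div_iff {N D : ℂ → ℂ} {x : ℂ} (hN : AnalyticAt ℂ N x)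
    (hD : AnalyticAt ℂ D x) (hD₀ : ∀ᶠ z in 𝓝[≠] x, D z ≠ 0) :
    (∃ g : ℂ → ℂ, ∃ U : Set ℂ, IsOpen U ∧ x ∈ U ∧ DifferentiableOn ℂ g U ∧
        ∀ s ∈ U, D s ≠ 0 → g s = N s / D s) ↔
      0 ≤ meromorphicOrderAt (fun s => N s / D s) x := by
  constructor
  · rintro ⟨g, U, hU, hxU, hg, hgF⟩
    have hFg : (fun s => N s / D s) =ᶠ[𝓝[≠] x] g := by
      filter_upwards [hD₀, nhdsWithin_le_nhds (hU.mem_nhds hxU)] with s hs hsU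
      exact (hgF s hsU hs).symm
    rw [meromorphicOrderAt_congr hFg]
    exact (hg.analyticAt (hU.mem_nhds hxU)).meromorphicOrderAt_nonneg
  · intro h
    obtain ⟨g, hg, hFg⟩ :=
      (hN.meromorphicAt.fun_div hD.meromorphicAt).meromorphicOrderAt_nonneg_iff.mp h
    have hgF : ∀ᶠ s in 𝓝 x, D s ≠ 0 → g s = N s / D s := by
      filter_upwards [eventually_nhdsWithin_iff.mp hFg] with s hs hDs
      rcases eq_or_ne s x with rfl | hsx
      · exact (((hN.div hD hDs).continuousAt.eventuallyEq_nhds_iff_eventuallyEq_nhdsNE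
          hg.continuousAt).mp hFg).self_of_nhds.symm
      · exact (hs hsx).symm
    obtain ⟨U, hU, hUo, hxU⟩ := eventually_nhds_iff.mp (hgF.and hg.eventually_analyticAt)
    exact ⟨g, U, hUo, hxU, fun s hs => (hU s hs).2.differentiableAt.differentiableWithinAt,
      fun s hs => (hU s hs).1⟩

theorem statement4_general (q : ℝ) (hq : 1 < q) {ι : Type*} [Fintype ι]
    (a b c : ι → ℝ) (hb : ∀ β, b β ≠ 0)
    (F : ℂ → ℂ)
    (hF : F = fun s : ℂ =>
      (∏ β, (1 - Complex.exp (-((a β : ℂ) + (b β : ℂ) * s) * (Real.log q : ℂ)))) /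
      (∏ β, (1 - Complex.exp ((-(c β : ℂ) + (a β : ℂ) + (b β : ℂ) * s) * (Real.log q : ℂ))))) :
    ∀ s₀ : ℝ, ∃ hm : MeromorphicAt F (s₀ : ℂ),
      ((∃ g : ℂ → ℂ, ∃ U : Set ℂ, IsOpen U ∧ (s₀ : ℂ) ∈ U ∧ DifferentiableOn ℂ g U ∧
          ∀ s ∈ U,
            (∏ β, (1 - Complex.exp ((-(c β : ℂ) + (a β : ℂ) + (b β : ℂ) * s) * (Real.log q : ℂ))))
              ≠ 0 → g s = F s)
        ↔ Set.ncard {β : ι | a β + b β * s₀ = c β} ≤ Set.ncard {β : ι | a β + b β * s₀ = 0}) ∧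
      (meromorphicOrderAt F (s₀ : ℂ) ≤ 0
        ↔ Set.ncard {β : ι | a β + b β * s₀ = 0} ≤ Set.ncard {β : ι | a β + b β * s₀ = c β}) := by
  intro s₀
  subst hF
  have hlog : Real.log q ≠ 0 := (Real.log_pos hq).ne'
  have hL : (Real.log q : ℂ) ≠ 0 := ofReal_ne_zero.mpr hlog
  set N : ℂ → ℂ := fun s => ∏ β, (1 - exp (-((a β : ℂ) + (b β : ℂ) * s) * (Real.log q : ℂ)))
  set D : ℂ → ℂ := fun s =>
    ∏ β, (1 - exp ((-(c β : ℂ) + (a β : ℂ) + (b β : ℂ) * s) * (Real.log q : ℂ)))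
  have hNa : AnalyticAt ℂ N s₀ := by fun_prop
  have hDa : AnalyticAt ℂ D s₀ := by fun_prop
  have hordN : meromorphicOrderAt N s₀ = Set.ncard {β : ι | a β + b β * s₀ = 0} := by
    rw [meromorphicOrderAt_prod_eq_ncard (fun β => by fun_prop)
      (fun β => deriv_one_sub_exp_ne_zero (by fun_prop) (by simp [hb, hL]))]
    congr 3
    ext β
    rw [show -((a β : ℂ) + b β * s₀) = ((-(a β + b β * s₀) : ℝ) : ℂ) by push_cast; ring,
      one_sub_exp_ofReal_mul_eq_zero_iff hlog, neg_eq_zero]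
  have hordD : meromorphicOrderAt D s₀ = Set.ncard {β : ι | a β + b β * s₀ = c β} := by
    rw [meromorphicOrderAt_prod_eq_ncard (fun β => by fun_prop)
      (fun β => deriv_one_sub_exp_ne_zero (by fun_prop) (by simp [hb, hL]))]
    congr 3
    ext β
    rw [show -(c β : ℂ) + a β + b β * s₀ = ((a β + b β * s₀ - c β : ℝ) : ℂ) by push_cast; ring,
      one_sub_exp_ofReal_mul_eq_zero_iff hlog, sub_eq_zero]
  have hord : meromorphicOrderAt (fun s => N s / D s) s₀ =
      ((Set.ncard {β : ι | a β + b β * s₀ = 0} - Set.ncard {β : ι | a β + b β * s₀ = c β} : ℤ) :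
        WithTop ℤ) := by
    rw [fun_meromorphicOrderAt_div hNa.meromorphicAt hDa.meromorphicAt, hordN, hordD]
    rfl
  have hD₀ : ∀ᶠ z in 𝓝[≠] (s₀ : ℂ), D z ≠ 0 :=
    (meromorphicOrderAt_ne_top_iff_eventually_ne_zero hDa.meromorphicAt).mp (by simp [hordD])
  refine ⟨hNa.meromorphicAt.fun_div hDa.meromorphicAt, ?_, ?_⟩
  · rw [exists_differentiableOn_eq_div_iff hNa hDa hD₀, hord, ← WithTop.coe_zero,
      WithTop.coe_le_coe]
    omega
  · rw [hord, ← WithTop.coe_zero, WithTop.coe_le_coe]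
    omega

/-- Fix `q > 1` and, for each `β` in a finite index set `ι`, reals
`a β, b β, c β` with `b β ≠ 0` and `c β > 0`. Let
`F(s) = ∏_β (1 − q^{−(a β + b β s)}) / ∏_β (1 − q^{−c β + a β + b β s})`
(where `q^z = exp(z log q)`), and for real `s₀` set
`z_n(s₀) = #{β : a β + b β s₀ = 0}` and `z_p(s₀) = #{β : a β + b β s₀ = c β}`. Then:
(i) `F` extends to a holomorphic function on a neighborhood of `s₀` (agreeing with `F`
wherever the denominator is nonzero) iff `z_n(s₀) ≥ z_p(s₀)`; and
(ii) the meromorphic order of `F` at `s₀` is `≤ 0` iff `z_n(s₀) ≤ z_p(s₀)`. -/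
theorem statement4 (q : ℝ) (hq : 1 < q) {ι : Type*} [Fintype ι]
    (a b c : ι → ℝ) (hb : ∀ β, b β ≠ 0) (hc : ∀ β, 0 < c β)
    (F : ℂ → ℂ)
    (hF : F = fun s : ℂ =>
      (∏ β, (1 - Complex.exp (-((a β : ℂ) + (b β : ℂ) * s) * (Real.log q : ℂ)))) /
      (∏ β, (1 - Complex.exp ((-(c β : ℂ) + (a β : ℂ) + (b β : ℂ) * s) * (Real.log q : ℂ))))) :
    ∀ s₀ : ℝ, ∃ hm : MeromorphicAt F (s₀ : ℂ),
      ((∃ g : ℂ → ℂ, ∃ U : Set ℂ, IsOpen U ∧ (s₀ : ℂ) ∈ U ∧ DifferentiableOn ℂ g U ∧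
          ∀ s ∈ U,
            (∏ β, (1 - Complex.exp ((-(c β : ℂ) + (a β : ℂ) + (b β : ℂ) * s) * (Real.log q : ℂ))))
              ≠ 0 → g s = F s)
        ↔ Set.ncard {β : ι | a β + b β * s₀ = c β} ≤ Set.ncard {β : ι | a β + b β * s₀ = 0}) ∧
      (meromorphicOrderAt F (s₀ : ℂ) ≤ 0
        ↔ Set.ncard {β : ι | a β + b β * s₀ = 0} ≤ Set.ncard {β : ι | a β + b β * s₀ = c β}) :=
  statement4_general q hq a b c hb F hF
end

section
/- Let n ≥ 2 and let Σ = {e_k − e_l : 1 ≤ k, l ≤ n+1, k ≠ l} ⊂ ℝ^{n+1} be the root system of type A_n with simple roots α_k = e_k − e_{k+1} (1 ≤ k ≤ n). Let 1 ≤ i < j ≤ n, let S = {α_k : 1 ≤ k ≤ n, k ≠ i, k ≠ j}, and let p be the orthogonal projection of ℝ^{n+1} onto the orthogonal complement of the span of S. Write ᾱ_i = p(α_i) and ᾱ_j = p(α_j). Then ᾱ_i and ᾱ_j are linearly independent and the set of reduced restricted roots Σ_red(S) equals {±ᾱ_i, ±ᾱ_j, ±(ᾱ_i + ᾱ_j)}.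 -/
/-! The orthogonal complement of the span of `S` consists of the vectors that are constant on
the three blocks of consecutive coordinates separated by `α_i` and `α_j`, so `p` averages over
blocks: `p(e_k) = u_{b(k)}`, where `u_t` is the normalised indicator vector of block `t`.
Hence the restricted roots are the six vectors `u_t - u_s` (`t ≠ s`), none of which is twice
another, and `ᾱ_i = u_0 - u_1`, `ᾱ_j = u_1 - u_2`, which are independent because `u_0` and
`u_2` have disjoint supports. -/

noncomputable section

/-- The `k`-th standard basis vector of `ℝ^N`. -/
def e {N : ℕ} (k : Fin N) : EuclideanSpace ℝ (Fin N) := EuclideanSpace.single k 1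

/-- Orthogonal projection of `ℝ^N` onto the orthogonal complement of the span of `S`. -/
def projC {N : ℕ} (S : Set (EuclideanSpace ℝ (Fin N))) (v : EuclideanSpace ℝ (Fin N)) :
    EuclideanSpace ℝ (Fin N) :=
  (Submodule.orthogonalProjection ((Submodule.span ℝ S)ᗮ) v : EuclideanSpace ℝ (Fin N))

/-- The set of restricted roots `Σ(S) = p(Σ) \ {0}`. -/
def restrictedRoots {N : ℕ} (Rts S : Set (EuclideanSpace ℝ (Fin N))) :
    Set (EuclideanSpace ℝ (Fin N)) :=
  (projC S '' Rts) \ {0}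

/-- The set of reduced restricted roots: those `x ∈ Σ(S)` with `x/2 ∉ Σ(S)`. -/
def reducedRestrictedRoots {N : ℕ} (Rts S : Set (EuclideanSpace ℝ (Fin N))) :
    Set (EuclideanSpace ℝ (Fin N)) :=
  {x ∈ restrictedRoots Rts S | ¬ (1 / 2 : ℝ) • x ∈ restrictedRoots Rts S}

/-- The root system of type `A_n` in `ℝ^{n+1}`. -/
def Aroots (n : ℕ) : Set (EuclideanSpace ℝ (Fin (n + 1))) :=
  {v | ∃ k l : Fin (n + 1), k ≠ l ∧ v = e k - e l}

/-- The simple roots `α_k = e_k − e_{k+1}` (`1 ≤ k ≤ n`, here indexed by `Fin n`). -/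
def Asimple (n : ℕ) (k : Fin n) : EuclideanSpace ℝ (Fin (n + 1)) := e k.castSucc - e k.succ

open Submodule

theorem Submodule.mem_orthogonal_span_iff {E : Type*} [NormedAddCommGroup E]
    [InnerProductSpace ℝ E] {s : Set E} {x : E} :
    x ∈ (span ℝ s)ᗮ ↔ ∀ u ∈ s, inner ℝ u x = 0 := by
  rw [← span_singleton_le_iff_mem, ← isOrtho_iff_le, isOrtho_comm, isOrtho_span]
  simp

theorem Fin.apply_eq_apply_of_monotone {N : ℕ} {α β : Type*} [PartialOrder β]
    {b : Fin (N + 1) → β} (hb : Monotone b) {x : Fin (N + 1) → α}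
    (hx : ∀ m : Fin N, b m.castSucc = b m.succ → x m.castSucc = x m.succ)
    {k l : Fin (N + 1)} (hkl : b k = b l) : x k = x l := by
  suffices key : ∀ l k, k ≤ l → b k = b l → x k = x l by
    rcases le_total k l with h | h
    · exact key l k h hkl
    · exact (key k l h hkl.symm).symm
  intro l
  induction l using Fin.induction with
  | zero => intro k hk _; rw [Fin.le_zero_iff.1 hk]
  | succ m ih =>
    intro k hk hkm
    rcases hk.eq_or_lt with rfl | hlt
    · rfl
    have hk' : k ≤ m.castSucc := Fin.le_castSucc_iff.2 hlt
    have hbm : b m.castSucc = b m.succ :=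
      le_antisymm (hb (Fin.castSucc_le_succ m)) (hkm ▸ hb hk')
    rw [ih k hk' (hkm.trans hbm.symm), hx m hbm]

namespace EuclideanSpace

variable {ι β : Type*} [Fintype ι] [DecidableEq β]

def blockConst (b : ι → β) : Submodule ℝ (EuclideanSpace ℝ ι) where
  carrier := {x | ∀ k l, b k = b l → x k = x l}
  add_mem' hx hy k l h := by simp [hx k l h, hy k l h]
  zero_mem' _ _ _ := rfl
  smul_mem' c x hx k l h := by simp [hx k l h]

def blockVec (b : ι → β) (t : β) : EuclideanSpace ℝ ι :=
  WithLp.toLp 2 fun m => if b m = t then ((Finset.univ.filter (b · = t)).card : ℝ)⁻¹ else 0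

variable {b : ι → β}

theorem blockVec_apply_of_ne {t : β} {m : ι} (h : b m ≠ t) : blockVec b t m = 0 := if_neg h

theorem blockVec_apply_self_pos (m : ι) : 0 < blockVec b (b m) m := by
  rw [blockVec, PiLp.toLp_apply, if_pos rfl, inv_pos, Nat.cast_pos]
  exact Finset.card_pos.2 ⟨m, by simp⟩

theorem blockVec_mem_blockConst (t : β) : blockVec b t ∈ blockConst b :=
  fun k l h => by simp [blockVec, h]

theorem inner_blockVec_of_mem_blockConst {x : EuclideanSpace ℝ ι} (hx : x ∈ blockConst b)
    (k : ι) : inner ℝ (blockVec b (b k)) x = x k := by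
  set F := Finset.univ.filter (b · = b k)
  have hF : (F.card : ℝ) ≠ 0 := Nat.cast_ne_zero.2 (Finset.card_ne_zero.2 ⟨k, by simp [F]⟩)
  calc inner ℝ (blockVec b (b k)) x
      = ∑ m ∈ F, (F.card : ℝ)⁻¹ * x k := by
        rw [PiLp.inner_apply, ← Finset.sum_filter_add_sum_filter_not Finset.univ (b · = b k),
          Finset.sum_eq_zero (s := Finset.univ.filter (¬ b · = b k)), add_zero]
        · refine Finset.sum_congr rfl fun m hm => ?_
          rw [Finset.mem_filter] at hm
          simp [blockVec, F, hm.2, hx m k hm.2, mul_comm]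
        · intro m hm
          rw [Finset.mem_filter] at hm
          simp [blockVec, hm.2]
    _ = x k := by rw [Finset.sum_const, nsmul_eq_mul, ← mul_assoc, mul_inv_cancel₀ hF, one_mul]

theorem starProjection_blockConst_single [DecidableEq ι] (k : ι) :
    (blockConst b).starProjection (single k 1) = blockVec b (b k) := by
  refine eq_starProjection_of_mem_of_inner_eq_zero (blockVec_mem_blockConst _) fun x hx => ?_
  rw [inner_sub_left, inner_single_left, inner_blockVec_of_mem_blockConst hx]
  simp

theorem blockVec_sub_ne_zero {t s : β} (ht : t ∈ Set.range b) (hts : t ≠ s) :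
    blockVec b t - blockVec b s ≠ 0 := by
  obtain ⟨m, rfl⟩ := ht
  intro h
  have hm := congrArg (· m) h
  simp only [PiLp.sub_apply, PiLp.zero_apply, blockVec_apply_of_ne hts, sub_zero] at hm
  exact (blockVec_apply_self_pos m).ne' hm

theorem half_smul_blockVec_sub_ne {t s t' s' : β} (ht : t ∈ Set.range b) (hts : t ≠ s)
    (hts' : t' ≠ s') :
    (1 / 2 : ℝ) • (blockVec b t - blockVec b s) ≠ blockVec b t' - blockVec b s' := by
  obtain ⟨m, rfl⟩ := ht
  intro h
  have hm := congrArg (· m) h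
  have hpos := blockVec_apply_self_pos (b := b) m
  simp only [PiLp.smul_apply, PiLp.sub_apply, smul_eq_mul, blockVec_apply_of_ne hts,
    sub_zero] at hm
  by_cases h₁ : b m = t'
  · subst h₁
    rw [blockVec_apply_of_ne hts', sub_zero] at hm
    linarith
  by_cases h₂ : b m = s'
  · subst h₂
    rw [blockVec_apply_of_ne h₁, zero_sub] at hm
    linarith
  rw [blockVec_apply_of_ne h₁, blockVec_apply_of_ne h₂, sub_zero] at hm
  linarith

theorem linearIndependent_blockVec_sub {t₀ t₁ t₂ : β} (h₀ : t₀ ∈ Set.range b)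
    (h₂ : t₂ ∈ Set.range b) (h₀₁ : t₀ ≠ t₁) (h₀₂ : t₀ ≠ t₂) (h₁₂ : t₁ ≠ t₂) :
    LinearIndependent ℝ ![blockVec b t₀ - blockVec b t₁, blockVec b t₁ - blockVec b t₂] := by
  obtain ⟨m₀, rfl⟩ := h₀
  obtain ⟨m₂, rfl⟩ := h₂
  rw [LinearIndependent.pair_iff]
  intro c d h
  have e₀ := congrArg (· m₀) h
  have e₂ := congrArg (· m₂) h
  simp only [PiLp.add_apply, PiLp.smul_apply, PiLp.sub_apply, PiLp.zero_apply, smul_eq_mul,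
    blockVec_apply_of_ne h₀₁, blockVec_apply_of_ne h₀₂, blockVec_apply_of_ne h₁₂.symm,
    blockVec_apply_of_ne h₀₂.symm, sub_zero, zero_sub, mul_zero, add_zero, zero_add, mul_neg,
    neg_eq_zero, mul_eq_zero] at e₀ e₂
  exact ⟨e₀.resolve_right (blockVec_apply_self_pos m₀).ne',
    e₂.resolve_right (blockVec_apply_self_pos m₂).ne'⟩

end EuclideanSpace

theorem setOf_sub_of_ne_fin_three {G : Type*} [AddCommGroup G] (u : Fin 3 → G) :
    {x | ∃ t s : Fin 3, t ≠ s ∧ x = u t - u s} =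
      {u 0 - u 1, -(u 0 - u 1), u 1 - u 2, -(u 1 - u 2),
       u 0 - u 1 + (u 1 - u 2), -(u 0 - u 1 + (u 1 - u 2))} := by
  ext x
  simp only [Set.mem_ofPred_eq, Set.mem_insert_iff, Set.mem_singleton_iff, neg_sub,
    sub_add_sub_cancel]
  constructor
  · rintro ⟨t, s, hts, rfl⟩
    fin_cases t <;> fin_cases s <;> simp at hts ⊢
  · rintro (rfl | rfl | rfl | rfl | rfl | rfl) <;> exact ⟨_, _, by decide, rfl⟩

namespace TypeA

open EuclideanSpace

variable {n : ℕ}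

/-- With 0-based indices, `α_i` and `α_j` cut `Fin (n + 1)` into the blocks `[0, i]`,
`[i + 1, j]` and `[j + 1, n]`. -/
def block (i j : Fin n) (k : Fin (n + 1)) : Fin 3 :=
  if (k : ℕ) ≤ i then 0 else if (k : ℕ) ≤ j then 1 else 2

theorem block_monotone (i j : Fin n) : Monotone (block i j) := by
  intro k l hkl
  have : (k : ℕ) ≤ l := hkl
  unfold block
  split_ifs <;> first | decide | omega

variable {i j : Fin n}

theorem block_castSucc_eq_block_succ_iff (hij : i < j) (m : Fin n) :
    block i j m.castSucc = block i j m.succ ↔ m ≠ i ∧ m ≠ j := by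
  have : (i : ℕ) < j := hij
  simp only [block, Fin.val_castSucc, Fin.val_succ, ne_eq, Fin.ext_iff]
  split_ifs <;> simp <;> omega

theorem block_castSucc_left : block i j i.castSucc = 0 := by simp [block]

theorem block_succ_left (hij : i < j) : block i j i.succ = 1 := by
  have : (i : ℕ) < j := hij
  simp [block]; omega

theorem block_castSucc_right (hij : i < j) : block i j j.castSucc = 1 := by
  have : (i : ℕ) < j := hij
  simp [block]; omega

theorem block_succ_right (hij : i < j) : block i j j.succ = 2 := by
  have : (i : ℕ) < j := hij
  simp [block]; omega

theorem block_surjective (hij : i < j) : Function.Surjective (block i j) := by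
  intro t
  fin_cases t
  exacts [⟨_, block_castSucc_left⟩, ⟨_, block_castSucc_right hij⟩, ⟨_, block_succ_right hij⟩]

theorem inner_Asimple (m : Fin n) (x : EuclideanSpace ℝ (Fin (n + 1))) :
    inner ℝ (Asimple n m) x = x m.castSucc - x m.succ := by
  simp [Asimple, e, inner_sub_left, inner_single_left]

theorem orthogonal_span_simple_eq_blockConst (hij : i < j) :
    (span ℝ {v | ∃ k : Fin n, k ≠ i ∧ k ≠ j ∧ v = Asimple n k})ᗮ = blockConst (block i j) := by
  ext x
  rw [mem_orthogonal_span_iff]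
  constructor
  · intro hx k l hkl
    refine Fin.apply_eq_apply_of_monotone (block_monotone i j) (fun m hm => ?_) hkl
    obtain ⟨hi, hj⟩ := (block_castSucc_eq_block_succ_iff hij m).1 hm
    have := hx _ ⟨m, hi, hj, rfl⟩
    rwa [inner_Asimple, sub_eq_zero] at this
  · rintro hx _ ⟨m, hi, hj, rfl⟩
    rw [inner_Asimple, hx _ _ ((block_castSucc_eq_block_succ_iff hij m).2 ⟨hi, hj⟩), sub_self]

variable {S : Set (EuclideanSpace ℝ (Fin (n + 1)))}

theorem projC_e_sub_e (hij : i < j)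
    (hS : S = {v | ∃ k : Fin n, k ≠ i ∧ k ≠ j ∧ v = Asimple n k}) (k l : Fin (n + 1)) :
    projC S (e k - e l) =
      blockVec (block i j) (block i j k) - blockVec (block i j) (block i j l) := by
  subst hS
  rw [projC, ← starProjection_apply, map_sub]
  simp only [orthogonal_span_simple_eq_blockConst hij, e, starProjection_blockConst_single]

theorem restrictedRoots_eq (hij : i < j)
    (hS : S = {v | ∃ k : Fin n, k ≠ i ∧ k ≠ j ∧ v = Asimple n k}) :
    restrictedRoots (Aroots n) S =
      {x | ∃ t s : Fin 3, t ≠ s ∧ x = blockVec (block i j) t - blockVec (block i j) s} := by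
  ext x
  constructor
  · rintro ⟨⟨_, ⟨k, l, -, rfl⟩, rfl⟩, hx⟩
    refine ⟨block i j k, block i j l, fun h => hx ?_, projC_e_sub_e hij hS k l⟩
    rw [Set.mem_singleton_iff, projC_e_sub_e hij hS, h, sub_self]
  · rintro ⟨t, s, hts, rfl⟩
    obtain ⟨k, rfl⟩ := block_surjective hij t
    obtain ⟨l, rfl⟩ := block_surjective hij s
    exact ⟨⟨e k - e l, ⟨k, l, fun h => hts (congrArg _ h), rfl⟩, projC_e_sub_e hij hS k l⟩,
      blockVec_sub_ne_zero ⟨k, rfl⟩ hts⟩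

end TypeA

open EuclideanSpace TypeA

theorem reducedRestrictedRoots_eq_self {N : ℕ} {Rts S : Set (EuclideanSpace ℝ (Fin N))}
    (h : ∀ x ∈ restrictedRoots Rts S, (1 / 2 : ℝ) • x ∉ restrictedRoots Rts S) :
    reducedRestrictedRoots Rts S = restrictedRoots Rts S :=
  Set.sep_eq_self_iff_mem_true.2 h

theorem statement5_general (n : ℕ) (i j : Fin n) (hij : i < j)
    (S : Set (EuclideanSpace ℝ (Fin (n + 1))))
    (hS : S = {v | ∃ k : Fin n, k ≠ i ∧ k ≠ j ∧ v = Asimple n k}) :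
    LinearIndependent ℝ ![projC S (Asimple n i), projC S (Asimple n j)] ∧
    reducedRestrictedRoots (Aroots n) S =
      {projC S (Asimple n i), -projC S (Asimple n i),
       projC S (Asimple n j), -projC S (Asimple n j),
       projC S (Asimple n i) + projC S (Asimple n j),
       -(projC S (Asimple n i) + projC S (Asimple n j))} := by
  set u := blockVec (block i j)
  have hαi : projC S (Asimple n i) = u 0 - u 1 := by
    rw [Asimple, projC_e_sub_e hij hS, block_castSucc_left, block_succ_left hij]
  have hαj : projC S (Asimple n j) = u 1 - u 2 := by
    rw [Asimple, projC_e_sub_e hij hS, block_castSucc_right hij, block_succ_right hij]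
  have hsurj := block_surjective hij
  refine ⟨hαi ▸ hαj ▸ linearIndependent_blockVec_sub (hsurj 0) (hsurj 2)
    (by decide) (by decide) (by decide), ?_⟩
  rw [reducedRestrictedRoots_eq_self, restrictedRoots_eq hij hS, hαi, hαj,
    setOf_sub_of_ne_fin_three]
  rw [restrictedRoots_eq hij hS]
  rintro _ ⟨t, s, hts, rfl⟩ ⟨t', s', hts', h⟩
  exact half_smul_blockVec_sub_ne (hsurj t) hts hts' h

/-- In type `A_n` (`n ≥ 2`), removing the simple roots `α_i, α_j`
(`1 ≤ i < j ≤ n`), the projections `ᾱ_i, ᾱ_j` onto the orthogonal complement of the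
span of the remaining simple roots are linearly independent, and the set of reduced
restricted roots is `{±ᾱ_i, ±ᾱ_j, ±(ᾱ_i + ᾱ_j)}` (a root system of type `A_2`). -/
theorem statement5 (n : ℕ) (hn : 2 ≤ n) (i j : Fin n) (hij : i < j)
    (S : Set (EuclideanSpace ℝ (Fin (n + 1))))
    (hS : S = {v | ∃ k : Fin n, k ≠ i ∧ k ≠ j ∧ v = Asimple n k}) :
    LinearIndependent ℝ ![projC S (Asimple n i), projC S (Asimple n j)] ∧
    reducedRestrictedRoots (Aroots n) S =
      {projC S (Asimple n i), -projC S (Asimple n i),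
       projC S (Asimple n j), -projC S (Asimple n j),
       projC S (Asimple n i) + projC S (Asimple n j),
       -(projC S (Asimple n i) + projC S (Asimple n j))} :=
  statement5_general n i j hij S hS

end
end

section
/- Let n ≥ 4 and let Σ = {±e_k ± e_l : 1 ≤ k < l ≤ n} ⊂ ℝ^n be the root system of type D_n with simple roots α_k = e_k − e_{k+1} (1 ≤ k ≤ n−1) and α_n = e_{n−1} + e_n. Let 1 ≤ i < j ≤ n−2, let S = {α_k : 1 ≤ k ≤ n, k ≠ i, k ≠ j}, and let p be the orthogonal projection of ℝ^n onto the orthogonal complement of the span of S. Write ᾱ_i = p(α_i) and ᾱ_j = p(α_j). Then ᾱ_i and ᾱ_j are linearly independent and the set of reduced restricted roots Σ_red(S) equals {±ᾱ_i, ±ᾱ_j, ±(ᾱ_i + ᾱ_j), ±(ᾱ_i + 2ᾱ_j)}. -/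
noncomputable section

/-- The root system of type `D_n` in `ℝ^n`: `±e_k ± e_l` (`k < l`). -/
def Droots (n : ℕ) : Set (EuclideanSpace ℝ (Fin n)) :=
  {v | ∃ k l : Fin n, k < l ∧
    (v = e k - e l ∨ v = e k + e l ∨ v = -e k + e l ∨ v = -e k - e l)}

/-- The simple roots of `D_n`: `α_k = e_k − e_{k+1}` (`1 ≤ k ≤ n−1`) and
`α_n = e_{n−1} + e_n` (indexed here by `Fin n`). -/
def Dsimple (n : ℕ) (hn : 2 ≤ n) (k : Fin n) : EuclideanSpace ℝ (Fin n) :=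
  if h : (k : ℕ) + 1 < n then e k - e ⟨(k : ℕ) + 1, h⟩
  else e ⟨n - 2, by omega⟩ + e ⟨n - 1, by omega⟩

open scoped RealInnerProductSpace
open Finset

/-!
The simple roots in `S` cut the indices into the blocks `I = [0, i]`, `J = (i, j]` and the tail
`(j, n)`. They span every `e k - e l` with `k, l` in a common block and, since the tail ends with
the two indices `n - 2, n - 1` for which both `e (n-2) ± e (n-1)` are available, every `e k` of
the tail. The indicator vectors of `I` and `J` are orthogonal to `S`, so `p (e k)` is the
centroid `A` of `I`, the centroid `B` of `J`, or `0`, according to the block of `k`. Hence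
`p (±e k ± e l) = c • A + d • B` with integers `|c| + |d| ≤ 2`, the indices `0, i + 1, j + 1`
realise every `(c, d) ∈ {-1, 0, 1}² \ {0}`, and passing to reduced roots removes exactly
`(±2, 0)` and `(0, ±2)`. Finally `ᾱ_i = A - B` and `ᾱ_j = B`.
-/

section ReducedB2

variable {V : Type*} [AddCommGroup V] [Module ℝ V]

lemma setOf_smul_add_smul_eq (α β : V) :
    {x : V | ∃ c d : ℤ, c.natAbs ≤ 1 ∧ d.natAbs ≤ 1 ∧ (c ≠ 0 ∨ d ≠ 0) ∧
        x = (c : ℝ) • (α + β) + (d : ℝ) • β} =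
      {α, -α, β, -β, α + β, -(α + β), α + (2 : ℝ) • β, -(α + (2 : ℝ) • β)} := by
  ext x
  simp only [Set.mem_ofPred_eq, Set.mem_insert_iff, Set.mem_singleton_iff]
  constructor
  · rintro ⟨c, d, hc, hd, hcd, rfl⟩
    obtain rfl | rfl | rfl : c = -1 ∨ c = 0 ∨ c = 1 := by omega
    all_goals obtain rfl | rfl | rfl : d = -1 ∨ d = 0 ∨ d = 1 := by omega
    all_goals first
      | (exfalso; omega)
      | (push_cast; first
          | (left; module) | (right; left; module) | (right; right; left; module)
          | (right; right; right; left; module) | (right; right; right; right; left; module)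
          | (right; right; right; right; right; left; module)
          | (right; right; right; right; right; right; left; module)
          | (right; right; right; right; right; right; right; module))
  · rintro (rfl | rfl | rfl | rfl | rfl | rfl | rfl | rfl)
    exacts [⟨1, -1, by decide, by decide, by decide, by push_cast; module⟩,
      ⟨-1, 1, by decide, by decide, by decide, by push_cast; module⟩,
      ⟨0, 1, by decide, by decide, by decide, by push_cast; module⟩,
      ⟨0, -1, by decide, by decide, by decide, by push_cast; module⟩,
      ⟨1, 0, by decide, by decide, by decide, by push_cast; module⟩,
      ⟨-1, 0, by decide, by decide, by decide, by push_cast; module⟩,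
      ⟨1, 1, by decide, by decide, by decide, by push_cast; module⟩,
      ⟨-1, -1, by decide, by decide, by decide, by push_cast; module⟩]

lemma sep_half_smul_not_mem_eq {a b : V} (hab : LinearIndependent ℝ ![a, b]) {T : Set V}
    (hsub : ∀ x ∈ T, x ≠ 0 ∧
      ∃ c d : ℤ, c.natAbs + d.natAbs ≤ 2 ∧ x = (c : ℝ) • a + (d : ℝ) • b)
    (hsup : ∀ c d : ℤ, c.natAbs ≤ 1 → d.natAbs ≤ 1 → (c ≠ 0 ∨ d ≠ 0) →
      (c : ℝ) • a + (d : ℝ) • b ∈ T) :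
    {x ∈ T | (1 / 2 : ℝ) • x ∉ T} = {x | ∃ c d : ℤ, c.natAbs ≤ 1 ∧ d.natAbs ≤ 1 ∧
      (c ≠ 0 ∨ d ≠ 0) ∧ x = (c : ℝ) • a + (d : ℝ) • b} := by
  ext x
  constructor
  · rintro ⟨hxT, hhalf⟩
    obtain ⟨hx0, c, d, hcd, rfl⟩ := hsub x hxT
    have hne : c ≠ 0 ∨ d ≠ 0 := by
      by_contra! h
      exact hx0 (by simp [h.1, h.2])
    by_cases hbox : c.natAbs ≤ 1 ∧ d.natAbs ≤ 1
    · exact ⟨c, d, hbox.1, hbox.2, hne, rfl⟩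
    -- otherwise `(c, d)` is `(±2, 0)` or `(0, ±2)`, and its half lies in `T`
    obtain ⟨c, rfl⟩ : 2 ∣ c := by omega
    obtain ⟨d, rfl⟩ : 2 ∣ d := by omega
    refine absurd ?_ hhalf
    convert hsup c d (by omega) (by omega) (by omega) using 1
    push_cast; module
  · rintro ⟨c, d, hc, hd, hne, rfl⟩
    refine ⟨hsup c d hc hd hne, fun hhalf => ?_⟩
    obtain ⟨-, c', d', -, h⟩ := hsub _ hhalf
    have := hab.eq_of_pair (s := (c : ℝ)) (t := d) (s' := 2 * c') (t' := 2 * d')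
      (by rw [mul_smul, mul_smul, ← smul_add, ← h]; module)
    norm_cast at this
    omega

end ReducedB2

section Projection

variable {n : ℕ} {S : Set (EuclideanSpace ℝ (Fin n))}

lemma projC_apply (S : Set (EuclideanSpace ℝ (Fin n))) (v : EuclideanSpace ℝ (Fin n)) :
    projC S v = (Submodule.span ℝ S)ᗮ.starProjection v := rfl

lemma projC_sub (v w : EuclideanSpace ℝ (Fin n)) : projC S (v - w) = projC S v - projC S w := by
  simp only [projC_apply, map_sub]

lemma projC_smul_add_smul (s t : ℝ) (v w : EuclideanSpace ℝ (Fin n)) :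
    projC S (s • v + t • w) = s • projC S v + t • projC S w := by
  simp only [projC_apply, map_add, map_smul]

lemma projC_eq_of_mem_orthogonal {v z : EuclideanSpace ℝ (Fin n)}
    (hz : z ∈ (Submodule.span ℝ S)ᗮ) (hvz : v - z ∈ Submodule.span ℝ S) : projC S v = z :=
  Submodule.eq_starProjection_of_mem_orthogonal hz
    ((Submodule.span ℝ S).le_orthogonal_orthogonal hvz)

lemma projC_eq_zero_of_mem_span {v : EuclideanSpace ℝ (Fin n)}
    (hv : v ∈ Submodule.span ℝ S) : projC S v = 0 :=
  projC_eq_of_mem_orthogonal (Submodule.zero_mem _) (by rwa [sub_zero])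

lemma mem_orthogonal_span_iff {v : EuclideanSpace ℝ (Fin n)} :
    v ∈ (Submodule.span ℝ S)ᗮ ↔ ∀ s ∈ S, ⟪s, v⟫ = 0 := by
  refine ⟨fun h s hs => Submodule.inner_right_of_mem_orthogonal (Submodule.subset_span hs) h,
    fun h => (Submodule.mem_orthogonal _ _).2 fun u hu => ?_⟩
  induction hu using Submodule.span_induction with
  | mem x hx => exact h x hx
  | zero => exact inner_zero_left _
  | add x y _ _ hx hy => rw [inner_add_left, hx, hy, add_zero]
  | smul c x _ hx => rw [inner_smul_left, hx, mul_zero]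

lemma inner_e_sum_e (k : Fin n) (F : Finset (Fin n)) :
    ⟪e k, ∑ l ∈ F, e l⟫ = if k ∈ F then 1 else 0 := by
  simp [e, inner_sum, EuclideanSpace.inner_single_left, PiLp.single_apply]

def blockMean (F : Finset (Fin n)) : EuclideanSpace ℝ (Fin n) :=
  (#F : ℝ)⁻¹ • ∑ l ∈ F, e l

lemma projC_e_eq_blockMean {F : Finset (Fin n)} {k : Fin n} (hF : F.Nonempty)
    (horth : ∑ l ∈ F, e l ∈ (Submodule.span ℝ S)ᗮ)
    (hsub : ∀ l ∈ F, e k - e l ∈ Submodule.span ℝ S) : projC S (e k) = blockMean F := by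
  refine projC_eq_of_mem_orthogonal (Submodule.smul_mem _ _ horth) ?_
  have hcard : (#F : ℝ) ≠ 0 := by exact_mod_cast hF.card_pos.ne'
  have : e k - blockMean F = (#F : ℝ)⁻¹ • ∑ l ∈ F, (e k - e l) := by
    rw [sum_sub_distrib, sum_const, ← Nat.cast_smul_eq_nsmul ℝ, smul_sub, smul_smul,
      inv_mul_cancel₀ hcard, one_smul, blockMean]
  rw [this]
  exact Submodule.smul_mem _ _ (Submodule.sum_mem _ hsub)

lemma blockMean_ne_zero {F : Finset (Fin n)} (hF : F.Nonempty) : blockMean F ≠ 0 := by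
  obtain ⟨k, hk⟩ := hF
  intro h
  have := congrArg (⟪e k, ·⟫) h
  simp only [blockMean, inner_smul_right, inner_e_sum_e, if_pos hk, inner_zero_right, mul_one,
    inv_eq_zero, Nat.cast_eq_zero, card_eq_zero] at this
  exact ne_empty_of_mem hk this

lemma inner_blockMean_of_disjoint {F G : Finset (Fin n)} (h : Disjoint F G) :
    ⟪blockMean F, blockMean G⟫ = 0 := by
  simp only [blockMean, inner_smul_left, inner_smul_right, sum_inner, inner_e_sum_e]
  rw [sum_ite_of_false fun l hl => disjoint_left.1 h hl]
  simp

lemma linearIndependent_blockMean {F G : Finset (Fin n)} (hF : F.Nonempty) (hG : G.Nonempty)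
    (h : Disjoint F G) : LinearIndependent ℝ ![blockMean F, blockMean G] := by
  refine linearIndependent_of_ne_zero_of_inner_eq_zero ?_ ?_
  · intro k; fin_cases k
    exacts [blockMean_ne_zero hF, blockMean_ne_zero hG]
  · intro k l hkl; fin_cases k <;> fin_cases l <;> simp at hkl
    · exact inner_blockMean_of_disjoint h
    · exact inner_blockMean_of_disjoint h.symm

end Projection

section RestrictedRoots

variable {n : ℕ} {S : Set (EuclideanSpace ℝ (Fin n))}

lemma mem_Droots_iff {v : EuclideanSpace ℝ (Fin n)} :
    v ∈ Droots n ↔ ∃ k l : Fin n, k < l ∧ ∃ s t : ℤ, s.natAbs = 1 ∧ t.natAbs = 1 ∧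
      v = (s : ℝ) • e k + (t : ℝ) • e l := by
  constructor
  · rintro ⟨k, l, hkl, rfl | rfl | rfl | rfl⟩
    exacts [⟨k, l, hkl, 1, -1, rfl, rfl, by push_cast; module⟩,
      ⟨k, l, hkl, 1, 1, rfl, rfl, by push_cast; module⟩,
      ⟨k, l, hkl, -1, 1, rfl, rfl, by push_cast; module⟩,
      ⟨k, l, hkl, -1, -1, rfl, rfl, by push_cast; module⟩]
  · rintro ⟨k, l, hkl, s, t, hs, ht, rfl⟩
    refine ⟨k, l, hkl, ?_⟩
    obtain rfl | rfl : s = 1 ∨ s = -1 := by omega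
    all_goals obtain rfl | rfl : t = 1 ∨ t = -1 := by omega
    · exact Or.inr <| Or.inl <| by push_cast; module
    · exact Or.inl <| by push_cast; module
    · exact Or.inr <| Or.inr <| Or.inl <| by push_cast; module
    · exact Or.inr <| Or.inr <| Or.inr <| by push_cast; module

lemma restrictedRoots_Droots_subset {a b : EuclideanSpace ℝ (Fin n)}
    (hp : ∀ k : Fin n, ∃ c d : ℤ, c.natAbs + d.natAbs ≤ 1 ∧
      projC S (e k) = (c : ℝ) • a + (d : ℝ) • b) :
    ∀ x ∈ restrictedRoots (Droots n) S, x ≠ 0 ∧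
      ∃ c d : ℤ, c.natAbs + d.natAbs ≤ 2 ∧ x = (c : ℝ) • a + (d : ℝ) • b := by
  rintro _ ⟨⟨v, hv, rfl⟩, hne⟩
  refine ⟨hne, ?_⟩
  obtain ⟨k, l, -, s, t, hs, ht, rfl⟩ := mem_Droots_iff.1 hv
  obtain ⟨c, d, hcd, hk⟩ := hp k
  obtain ⟨c', d', hcd', hl⟩ := hp l
  refine ⟨s * c + t * c', s * d + t * d', ?_, ?_⟩
  · obtain rfl | rfl : s = 1 ∨ s = -1 := by omega
    all_goals obtain rfl | rfl : t = 1 ∨ t = -1 := by omega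
    all_goals omega
  · rw [projC_smul_add_smul, hk, hl]
    push_cast
    module

lemma mem_restrictedRoots_Droots {a b : EuclideanSpace ℝ (Fin n)}
    (hab : LinearIndependent ℝ ![a, b]) {k₀ k₁ k₂ : Fin n} (h₀₁ : k₀ < k₁) (h₁₂ : k₁ < k₂)
    (ha : projC S (e k₀) = a) (hb : projC S (e k₁) = b) (h0 : projC S (e k₂) = 0)
    (c d : ℤ) (hc : c.natAbs ≤ 1) (hd : d.natAbs ≤ 1) (hcd : c ≠ 0 ∨ d ≠ 0) :
    (c : ℝ) • a + (d : ℝ) • b ∈ restrictedRoots (Droots n) S := by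
  refine ⟨?_, fun h => ?_⟩
  · by_cases hc0 : c = 0
    · refine ⟨(d : ℝ) • e k₁ + ((1 : ℤ) : ℝ) • e k₂,
        mem_Droots_iff.2 ⟨k₁, k₂, h₁₂, d, 1, by omega, rfl, rfl⟩, ?_⟩
      rw [projC_smul_add_smul, hb, h0, hc0]
      simp
    by_cases hd0 : d = 0
    · refine ⟨(c : ℝ) • e k₀ + ((1 : ℤ) : ℝ) • e k₂,
        mem_Droots_iff.2 ⟨k₀, k₂, h₀₁.trans h₁₂, c, 1, by omega, rfl, rfl⟩, ?_⟩
      rw [projC_smul_add_smul, ha, h0, hd0]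
      simp
    · exact ⟨(c : ℝ) • e k₀ + (d : ℝ) • e k₁,
        mem_Droots_iff.2 ⟨k₀, k₁, h₀₁, c, d, by omega, by omega, rfl⟩,
        by rw [projC_smul_add_smul, ha, hb]⟩
  · have := LinearIndependent.pair_iff.1 hab c d h
    norm_cast at this
    omega

end RestrictedRoots

section Dn

variable {n : ℕ} {h2 : 2 ≤ n} {i j : Fin n} {S : Set (EuclideanSpace ℝ (Fin n))}

lemma Dsimple_of_lt {k : Fin n} (hk : (k : ℕ) + 1 < n) :
    Dsimple n h2 k = e k - e ⟨(k : ℕ) + 1, hk⟩ :=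
  dif_pos hk

lemma Dsimple_of_not_lt {k : Fin n} (hk : ¬(k : ℕ) + 1 < n) :
    Dsimple n h2 k = e ⟨n - 2, by omega⟩ + e ⟨n - 1, by omega⟩ :=
  dif_neg hk

variable (hS : S = {v | ∃ k : Fin n, k ≠ i ∧ k ≠ j ∧ v = Dsimple n h2 k})
include hS

lemma Dsimple_mem_span {k : Fin n} (hki : k ≠ i) (hkj : k ≠ j) :
    Dsimple n h2 k ∈ Submodule.span ℝ S :=
  Submodule.subset_span (hS ▸ ⟨k, hki, hkj, rfl⟩)

lemma mem_orthogonal_span_of_inner_Dsimple {v : EuclideanSpace ℝ (Fin n)}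
    (h : ∀ k : Fin n, k ≠ i → k ≠ j → ⟪Dsimple n h2 k, v⟫ = 0) :
    v ∈ (Submodule.span ℝ S)ᗮ := by
  subst hS
  rw [mem_orthogonal_span_iff]
  rintro _ ⟨k, hki, hkj, rfl⟩
  exact h k hki hkj

lemma e_sub_e_mem_span_of_le {k l : Fin n} (hkl : k ≤ l)
    (hcut : ∀ m : Fin n, k ≤ m → m < l → m ≠ i ∧ m ≠ j) :
    e k - e l ∈ Submodule.span ℝ S := by
  obtain ⟨d, hd⟩ : ∃ d, (l : ℕ) = k + d := ⟨l - k, by rw [Fin.le_def] at hkl; omega⟩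
  induction d generalizing l with
  | zero => rw [Fin.ext hd, sub_self]; exact Submodule.zero_mem _
  | succ d ih =>
    set m : Fin n := ⟨k + d, by omega⟩
    have hml : m < l := by rw [Fin.lt_def]; simp only [m]; omega
    have hkm : k ≤ m := by rw [Fin.le_def]; simp only [m]; omega
    have hstep : e m - e l = Dsimple n h2 m := by
      rw [Dsimple_of_lt (by omega)]; congr 2; exact Fin.ext (by simp only [m]; omega)
    have := ih hkm (fun m' hkm' hm' => hcut m' hkm' (hm'.trans hml)) rfl
    rw [← sub_add_sub_cancel _ (e m), hstep]
    exact Submodule.add_mem _ this (Dsimple_mem_span hS (hcut m hkm hml).1 (hcut m hkm hml).2)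

lemma e_sub_e_mem_span {k l : Fin n}
    (hcut : ∀ m : Fin n, min k l ≤ m → m < max k l → m ≠ i ∧ m ≠ j) :
    e k - e l ∈ Submodule.span ℝ S := by
  rcases le_total k l with h | h
  · exact e_sub_e_mem_span_of_le hS h fun m h1 h2 =>
      hcut m (min_le_of_left_le h1) (lt_max_of_lt_right h2)
  · rw [← neg_sub]
    exact Submodule.neg_mem _ <| e_sub_e_mem_span_of_le hS h fun m h1 h2 =>
      hcut m (min_le_of_right_le h1) (lt_max_of_lt_left h2)

variable (hj : (j : ℕ) + 2 < n)
include hj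

lemma sum_e_mem_orthogonal {F : Finset (Fin n)}
    (hstep : ∀ k : Fin n, (hk : (k : ℕ) + 1 < n) → k ≠ i → k ≠ j → (k ∈ F ↔ ⟨k + 1, hk⟩ ∈ F))
    (hlast : ∀ l : Fin n, j < l → l ∉ F) :
    ∑ l ∈ F, e l ∈ (Submodule.span ℝ S)ᗮ := by
  refine mem_orthogonal_span_of_inner_Dsimple hS fun k hki hkj => ?_
  by_cases hk : (k : ℕ) + 1 < n
  · rw [Dsimple_of_lt hk, inner_sub_left, inner_e_sum_e, inner_e_sum_e]
    simp only [hstep k hk hki hkj, sub_self]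
  · rw [Dsimple_of_not_lt hk, inner_add_left, inner_e_sum_e, inner_e_sum_e,
      if_neg (hlast _ (by rw [Fin.lt_def]; simp only; omega)),
      if_neg (hlast _ (by rw [Fin.lt_def]; simp only; omega)), add_zero]

variable (hij : i < j)
include hij

lemma e_mem_span_of_lt {k : Fin n} (hk : j < k) : e k ∈ Submodule.span ℝ S := by
  rw [Fin.lt_def] at hij hk
  set a : Fin n := ⟨n - 2, by omega⟩
  set b : Fin n := ⟨n - 1, by omega⟩
  -- `e b` is half the difference of the last two simple roots, both of which lie in `S`
  have hb : e b ∈ Submodule.span ℝ S := by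
    have hdiff : Dsimple n h2 b - Dsimple n h2 a = (2 : ℝ) • e b := by
      rw [Dsimple_of_not_lt (by simp only [b]; omega), Dsimple_of_lt (by simp only [a]; omega)]
      rw [show (⟨(a : ℕ) + 1, _⟩ : Fin n) = b from Fin.ext (by simp only [a, b]; omega)]
      module
    have := Submodule.sub_mem _ (Dsimple_mem_span hS (h2 := h2) (k := b) ?_ ?_)
      (Dsimple_mem_span hS (h2 := h2) (k := a) ?_ ?_)
    · rw [hdiff] at this
      simpa using Submodule.smul_mem _ (1 / 2 : ℝ) this
    all_goals rw [ne_eq, Fin.ext_iff]; simp only [a, b]; omega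
  rw [← sub_add_cancel (e k) (e b)]
  refine Submodule.add_mem _ (e_sub_e_mem_span_of_le hS ?_ fun m hkm _ => ?_) hb
  · rw [Fin.le_def]; simp only [b]; omega
  · rw [Fin.le_def] at hkm; rw [ne_eq, ne_eq, Fin.ext_iff, Fin.ext_iff]; omega

lemma projC_e_of_le {k : Fin n} (hk : k ≤ i) : projC S (e k) = blockMean (Iic i) := by
  refine projC_e_eq_blockMean ⟨i, mem_Iic.2 le_rfl⟩ (sum_e_mem_orthogonal hS hj ?_ ?_) ?_
  · intro m hm hmi hmj
    simp only [mem_Iic, Fin.le_def, ne_eq, Fin.ext_iff] at hmi ⊢; omega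
  · intro l hl
    simp only [mem_Iic, Fin.le_def, Fin.lt_def] at hl hij ⊢; omega
  · intro l hl
    refine e_sub_e_mem_span hS fun m h1 h2 => ?_
    rw [min_le_iff] at h1; rw [lt_max_iff] at h2
    simp only [mem_Iic, Fin.le_def, Fin.lt_def, ne_eq, Fin.ext_iff] at hk hl h1 h2 hij ⊢; omega

lemma projC_e_of_mem_Ioc {k : Fin n} (hk : k ∈ Ioc i j) :
    projC S (e k) = blockMean (Ioc i j) := by
  refine projC_e_eq_blockMean ⟨j, mem_Ioc.2 ⟨hij, le_rfl⟩⟩ (sum_e_mem_orthogonal hS hj ?_ ?_) ?_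
  · intro m hm hmi hmj
    simp only [mem_Ioc, Fin.le_def, Fin.lt_def, ne_eq, Fin.ext_iff] at hmi hmj ⊢; omega
  · intro l hl
    simp only [mem_Ioc, Fin.le_def, Fin.lt_def] at hl ⊢; omega
  · intro l hl
    refine e_sub_e_mem_span hS fun m h1 h2 => ?_
    rw [min_le_iff] at h1; rw [lt_max_iff] at h2
    simp only [mem_Ioc, Fin.le_def, Fin.lt_def, ne_eq, Fin.ext_iff] at hk hl h1 h2 ⊢; omega

lemma projC_e_of_lt {k : Fin n} (hk : j < k) : projC S (e k) = 0 :=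
  projC_eq_zero_of_mem_span (e_mem_span_of_lt hS hj hij hk)

lemma projC_e_eq_smul_add_smul (k : Fin n) : ∃ c d : ℤ, c.natAbs + d.natAbs ≤ 1 ∧
    projC S (e k) = (c : ℝ) • blockMean (Iic i) + (d : ℝ) • blockMean (Ioc i j) := by
  rcases le_or_gt k i with hki | hik
  · exact ⟨1, 0, by decide, by rw [projC_e_of_le hS hj hij hki]; simp⟩
  rcases le_or_gt k j with hkj | hjk
  · exact ⟨0, 1, by decide, by rw [projC_e_of_mem_Ioc hS hj hij (mem_Ioc.2 ⟨hik, hkj⟩)]; simp⟩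
  · exact ⟨0, 0, by decide, by rw [projC_e_of_lt hS hj hij hjk]; simp⟩

lemma projC_Dsimple_left :
    projC S (Dsimple n h2 i) = blockMean (Iic i) - blockMean (Ioc i j) := by
  have hij' : (i : ℕ) < j := hij
  rw [Dsimple_of_lt (by omega), projC_sub, projC_e_of_le hS hj hij le_rfl,
    projC_e_of_mem_Ioc hS hj hij (by simp only [mem_Ioc, Fin.le_def, Fin.lt_def]; omega)]

lemma projC_Dsimple_right : projC S (Dsimple n h2 j) = blockMean (Ioc i j) := by
  rw [Dsimple_of_lt (by omega), projC_sub, projC_e_of_mem_Ioc hS hj hij (mem_Ioc.2 ⟨hij, le_rfl⟩),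
    projC_e_of_lt hS hj hij (by rw [Fin.lt_def]; simp only; omega), sub_zero]

end Dn

/-- In type `D_n` (`n ≥ 4`), removing the simple roots `α_i, α_j`
(`1 ≤ i < j ≤ n−2`), the projections `ᾱ_i, ᾱ_j` onto the orthogonal complement of the
span of the remaining simple roots are linearly independent, and the set of reduced
restricted roots is `{±ᾱ_i, ±ᾱ_j, ±(ᾱ_i + ᾱ_j), ±(ᾱ_i + 2ᾱ_j)}` (type `B_2`). -/
theorem statement10 (n : ℕ) (i j : Fin n) (hij : i < j)
    (hj : (j : ℕ) + 2 < n)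
    (S : Set (EuclideanSpace ℝ (Fin n)))
    (hS : S = {v | ∃ k : Fin n, k ≠ i ∧ k ≠ j ∧ v = Dsimple n (by omega) k}) :
    LinearIndependent ℝ
      ![projC S (Dsimple n (by omega) i), projC S (Dsimple n (by omega) j)] ∧
    reducedRestrictedRoots (Droots n) S =
      {projC S (Dsimple n (by omega) i), -projC S (Dsimple n (by omega) i),
       projC S (Dsimple n (by omega) j), -projC S (Dsimple n (by omega) j),
       projC S (Dsimple n (by omega) i) + projC S (Dsimple n (by omega) j),
       -(projC S (Dsimple n (by omega) i) + projC S (Dsimple n (by omega) j)),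
       projC S (Dsimple n (by omega) i) + (2 : ℝ) • projC S (Dsimple n (by omega) j),
       -(projC S (Dsimple n (by omega) i) + (2 : ℝ) • projC S (Dsimple n (by omega) j))} := by
  have hij' : (i : ℕ) < j := hij
  have hA : projC S (e ⟨0, by omega⟩) = blockMean (Iic i) :=
    projC_e_of_le hS hj hij (Fin.mk_le_mk.2 (Nat.zero_le _))
  have hB : projC S (e ⟨i + 1, by omega⟩) = blockMean (Ioc i j) :=
    projC_e_of_mem_Ioc hS hj hij (by simp only [mem_Ioc, Fin.le_def, Fin.lt_def]; omega)
  have h0 : projC S (e ⟨j + 1, by omega⟩) = 0 :=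
    projC_e_of_lt hS hj hij (Fin.lt_def.2 (by simp only; omega))
  have hAB : LinearIndependent ℝ ![blockMean (Iic i), blockMean (Ioc i j)] :=
    linearIndependent_blockMean ⟨i, mem_Iic.2 le_rfl⟩ ⟨j, mem_Ioc.2 ⟨hij, le_rfl⟩⟩
      (disjoint_left.2 fun k hki hkj => (mem_Ioc.1 hkj).1.not_ge (mem_Iic.1 hki))
  rw [projC_Dsimple_left hS hj hij, projC_Dsimple_right hS hj hij, ← setOf_smul_add_smul_eq,
    sub_add_cancel]
  exact ⟨LinearIndependent.pair_add_left_iff.1 (by rwa [sub_add_cancel]),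
    sep_half_smul_not_mem_eq hAB
      (restrictedRoots_Droots_subset (projC_e_eq_smul_add_smul hS hj hij))
      (mem_restrictedRoots_Droots hAB (Fin.mk_lt_mk.2 (by omega)) (Fin.mk_lt_mk.2 (by omega))
        hA hB h0)⟩

end
end
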